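/- arXiv:2401.13508 — 3 statements merged into one kernel-verified Lean document; each statement's English description precedes it below -/
import Mathlib

section
/- Let p be a prime number and set p* = p if p ≥ 3 and p* = 4 if p = 2. Let E be a complete nonarchimedean normed field equipped with a structure of normed ℚ_p-algebra (so the norm of E is multiplicative and restricts to the standard p-adic norm on ℚ_p). Then for every x ∈ E with ‖x‖ ≤ ‖p*‖, the p-adic logarithm series log(1+x) = Σ_{n≥1} (−1)^{n−1} xⁿ/n converges in E and satisfies ‖log(1+x)‖ = ‖x‖. -/
/-!
For `n ≥ 1` the `p`-adic norm of `n` is at least `1 / n`, so the `n`-th term of the series has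
norm at most `n ‖x‖ⁿ`. When `‖x‖ ≤ 1/3` this tends to `0`, which gives convergence in the
complete ultrametric field `E`, and every term after the first has norm at most `(2/3) ‖x‖`, so
by the ultrametric inequality the first term `x` dominates. Finally `‖p*‖ ≤ 1/3`, the choice
`p* = 4` for `p = 2` being what makes this hold.
-/

open Filter Topology

lemma two_add_le_two_mul_three_pow (n : ℕ) : n + 2 ≤ 2 * 3 ^ n := by
  induction n with
  | zero => norm_num
  | succ n ih => rw [pow_succ]; omega

namespace Padic

variable (p : ℕ) [Fact p.Prime]

lemma inv_natCast_le_norm_natCast {n : ℕ} (hn : n ≠ 0) : (n : ℝ)⁻¹ ≤ ‖(n : ℚ_[p])‖ := by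
  rw [norm_eq_zpow_neg_valuation (Nat.cast_ne_zero.2 hn), valuation_natCast, zpow_neg,
    zpow_natCast]
  exact inv_anti₀ (pow_pos (mod_cast (Fact.out : p.Prime).pos) _)
    (by exact_mod_cast Nat.le_of_dvd (Nat.pos_of_ne_zero hn) pow_padicValNat_dvd)

lemma norm_natCast_pstar_le : ‖((if 3 ≤ p then p else 4 : ℕ) : ℚ_[p])‖ ≤ 3⁻¹ := by
  split_ifs with hp
  · rw [norm_p]
    exact inv_anti₀ (by norm_num) (by exact_mod_cast hp)
  · obtain rfl : p = 2 := by have := (Fact.out : p.Prime).two_le; omega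
    rw [show ((4 : ℕ) : ℚ_[2]) = ((2 : ℕ) : ℚ_[2]) ^ 2 by norm_num, norm_pow, norm_p]
    norm_num

end Padic

lemma IsUltrametricDist.norm_tsum_eq_norm_zero {G : Type*} [NormedAddCommGroup G]
    [IsUltrametricDist G] {f : ℕ → G} (hf : Summable f) {C : ℝ} (hC : C < ‖f 0‖)
    (h : ∀ n, ‖f (n + 1)‖ ≤ C) : ‖∑' n, f n‖ = ‖f 0‖ := by
  have htail : ‖∑' n, f (n + 1)‖ < ‖f 0‖ := (norm_tsum_le_of_forall_le h).trans_lt hC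
  rw [hf.tsum_eq_zero_add, norm_add_eq_max_of_norm_ne_norm htail.ne', max_eq_left htail.le]

section LogSeries

variable (p : ℕ) [Fact p.Prime] {E : Type*} [NormedField E]

lemma norm_natCast_eq_norm_natCast_padic [NormedAlgebra ℚ_[p] E] (n : ℕ) :
    ‖(n : E)‖ = ‖(n : ℚ_[p])‖ := by
  rw [← map_natCast (algebraMap ℚ_[p] E), norm_algebraMap']

lemma norm_logSeries_term_le [NormedAlgebra ℚ_[p] E] (x : E) (n : ℕ) :
    ‖(-1 : E) ^ n * x ^ (n + 1) / ((n : E) + 1)‖ ≤ (n + 1) * ‖x‖ ^ (n + 1) := by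
  have hden : ((n : ℝ) + 1)⁻¹ ≤ ‖(n : E) + 1‖ := by
    rw [← Nat.cast_succ, ← Nat.cast_succ, norm_natCast_eq_norm_natCast_padic p]
    exact Padic.inv_natCast_le_norm_natCast p n.succ_ne_zero
  rw [norm_div, norm_mul, norm_pow, norm_pow, norm_neg, norm_one, one_pow, one_mul]
  calc ‖x‖ ^ (n + 1) / ‖(n : E) + 1‖ ≤ ‖x‖ ^ (n + 1) / ((n : ℝ) + 1)⁻¹ :=
        div_le_div_of_nonneg_left (by positivity) (by positivity) hden
    _ = (n + 1) * ‖x‖ ^ (n + 1) := by rw [div_inv_eq_mul, mul_comm]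

lemma norm_logSeries_term_succ_le [NormedAlgebra ℚ_[p] E] {x : E} (hx : ‖x‖ ≤ 3⁻¹) (n : ℕ) :
    ‖(-1 : E) ^ (n + 1) * x ^ (n + 1 + 1) / (((n + 1 : ℕ) : E) + 1)‖ ≤ 2 / 3 * ‖x‖ := by
  have hcount : ((n : ℝ) + 2) * (3⁻¹ : ℝ) ^ (n + 1) ≤ 2 / 3 := by
    have : ((n : ℝ) + 2) ≤ 2 * 3 ^ n := by exact_mod_cast two_add_le_two_mul_three_pow n
    rw [inv_pow, pow_succ]
    field_simp
    linarith
  calc _ ≤ ((n + 1 : ℕ) + 1) * ‖x‖ ^ (n + 1 + 1) := norm_logSeries_term_le p x (n + 1)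
    _ = ‖x‖ * (((n : ℝ) + 2) * ‖x‖ ^ (n + 1)) := by push_cast; ring
    _ ≤ ‖x‖ * (((n : ℝ) + 2) * (3⁻¹ : ℝ) ^ (n + 1)) := by gcongr
    _ ≤ 2 / 3 * ‖x‖ := by rw [mul_comm]; exact mul_le_mul_of_nonneg_right hcount (norm_nonneg x)

variable [IsUltrametricDist E] [CompleteSpace E]

lemma summable_logSeries [NormedAlgebra ℚ_[p] E] {x : E} (hx : ‖x‖ < 1) :
    Summable (fun n : ℕ => (-1 : E) ^ n * x ^ (n + 1) / ((n : E) + 1)) := by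
  refine NonarchimedeanAddGroup.summable_of_tendsto_cofinite_zero ?_
  rw [Nat.cofinite_eq_atTop, tendsto_zero_iff_norm_tendsto_zero]
  have hlim : Tendsto (fun n : ℕ => ((n : ℝ) + 1) * ‖x‖ ^ (n + 1)) atTop (𝓝 0) := by
    refine ((tendsto_self_mul_const_pow_of_lt_one (norm_nonneg x) hx).comp
      (tendsto_add_atTop_nat 1)).congr fun n => ?_
    simp
  exact squeeze_zero (fun _ => norm_nonneg _) (norm_logSeries_term_le p x) hlim

lemma norm_tsum_logSeries_eq [NormedAlgebra ℚ_[p] E] {x : E} (hx : ‖x‖ ≤ 3⁻¹) :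
    ‖∑' n : ℕ, (-1 : E) ^ n * x ^ (n + 1) / ((n : E) + 1)‖ = ‖x‖ := by
  rcases eq_or_ne x 0 with rfl | hx0
  · simp
  have hsum := summable_logSeries p (hx.trans_lt (by norm_num))
  convert IsUltrametricDist.norm_tsum_eq_norm_zero hsum (C := 2 / 3 * ‖x‖) ?_
    (norm_logSeries_term_succ_le p hx) using 1 <;> simp
  linarith [norm_pos_iff.2 hx0]

end LogSeries

/-- Let `p` be a prime number and set `p* = p` if `p ≥ 3` and `p* = 4`
if `p = 2`.  Let `E` be a complete nonarchimedean normed field equipped with a structure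
of normed `ℚ_p`-algebra (so the norm of `E` is multiplicative and restricts to the
standard `p`-adic norm on `ℚ_p`).  Then for every `x ∈ E` with `‖x‖ ≤ ‖p*‖`, the
`p`-adic logarithm series `log(1+x) = Σ_{n≥1} (−1)^{n−1} xⁿ/n` converges in `E` and
satisfies `‖log(1+x)‖ = ‖x‖`. -/
theorem padic_log_norm_eq (p : ℕ) [Fact p.Prime]
    (E : Type*) [NormedField E] [CompleteSpace E] [NormedAlgebra ℚ_[p] E]
    (hna : IsNonarchimedean (fun y : E => ‖y‖))
    (pstar : ℕ) (hpstar : pstar = if 3 ≤ p then p else 4)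
    (x : E) (hx : ‖x‖ ≤ ‖(pstar : E)‖) :
    Summable (fun n : ℕ => (-1 : E) ^ n * x ^ (n + 1) / ((n : E) + 1)) ∧
      ‖∑' n : ℕ, (-1 : E) ^ n * x ^ (n + 1) / ((n : E) + 1)‖ = ‖x‖ := by
  have : IsUltrametricDist E := .isUltrametricDist_of_isNonarchimedean_norm hna
  have hx3 : ‖x‖ ≤ 3⁻¹ := by
    rw [norm_natCast_eq_norm_natCast_padic p, hpstar] at hx
    exact hx.trans (Padic.norm_natCast_pstar_le p)
  exact ⟨summable_logSeries p (hx3.trans_lt (by norm_num)), norm_tsum_logSeries_eq p hx3⟩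
end

section
/- Let p be a prime number and let E be a complete nonarchimedean normed field equipped with a structure of normed ℚ_p-algebra (so the norm of E is multiplicative and restricts to the standard p-adic norm on ℚ_p). If x ∈ E is nonzero and ‖x‖ < ‖p‖^{1/(p−1)}, then for every integer n ≥ 2 one has ‖xⁿ/n‖ < ‖x‖ (where n is regarded as an element of E via the natural map ℕ → E). -/
/-!
Writing `c = ‖p‖ ^ (1 / (p - 1))`, so that `c ^ (p - 1) = ‖p‖`, one has
`‖n‖ = ‖p‖ ^ v_p(n) = c ^ (v_p(n) (p - 1)) ≥ c ^ (n - 1)`, because Bernoulli's inequality gives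
`1 + v_p(n) (p - 1) ≤ p ^ v_p(n) ≤ n`. Hence `‖x‖ ^ (n - 1) < c ^ (n - 1) ≤ ‖n‖`, which is the
claim after dividing `‖x‖ ^ n = ‖x‖ ^ (n - 1) ‖x‖` by `‖n‖`.
-/

theorem padicValNat_mul_sub_one_lt {p n : ℕ} (hp : p ≠ 0) (hn : n ≠ 0) :
    padicValNat p n * (p - 1) < n := by
  have bernoulli := one_add_le_pow_of_two_add_nonneg (Nat.zero_le (2 + (p - 1))) (padicValNat p n)
  rw [Nat.cast_id, Nat.add_sub_cancel' (Nat.one_le_iff_ne_zero.mpr hp)] at bernoulli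
  have := Nat.le_of_dvd (Nat.pos_of_ne_zero hn) (pow_padicValNat_dvd (p := p) (n := n))
  omega

theorem Padic.norm_natCast_eq_norm_p_pow (p : ℕ) [Fact p.Prime] {n : ℕ} (hn : n ≠ 0) :
    ‖(n : ℚ_[p])‖ = ‖(p : ℚ_[p])‖ ^ padicValNat p n := by
  rw [Padic.norm_eq_zpow_neg_valuation (Nat.cast_ne_zero.mpr hn), Padic.valuation_natCast,
    Padic.norm_p, zpow_neg, zpow_natCast, inv_pow]

theorem norm_natCast_eq_norm_p_pow (p : ℕ) [Fact p.Prime] {E : Type*} [SeminormedRing E]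
    [NormedAlgebra ℚ_[p] E] [NormOneClass E] {n : ℕ} (hn : n ≠ 0) :
    ‖(n : E)‖ = ‖(p : E)‖ ^ padicValNat p n := by
  simp only [← map_natCast (algebraMap ℚ_[p] E), norm_algebraMap']
  exact Padic.norm_natCast_eq_norm_p_pow p hn

theorem norm_p_rpow_pow_pred_le_norm_natCast (p : ℕ) [hp : Fact p.Prime] {E : Type*}
    [SeminormedRing E] [NormedAlgebra ℚ_[p] E] [NormOneClass E] {n : ℕ} (hn : n ≠ 0) :
    (‖(p : E)‖ ^ ((1 : ℝ) / ((p : ℝ) - 1))) ^ (n - 1) ≤ ‖(n : E)‖ := by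
  have hp_pred : ((p - 1 : ℕ) : ℝ) = (p : ℝ) - 1 := Nat.cast_pred hp.out.pos
  have hc_pow : (‖(p : E)‖ ^ ((1 : ℝ) / ((p : ℝ) - 1))) ^ (p - 1) = ‖(p : E)‖ := by
    rw [one_div, ← hp_pred]
    exact Real.rpow_inv_natCast_pow (norm_nonneg _) (by have := hp.out.two_le; omega)
  have hc_le_one : ‖(p : E)‖ ^ ((1 : ℝ) / ((p : ℝ) - 1)) ≤ 1 := by
    refine Real.rpow_le_one (norm_nonneg _) ?_ (by rw [← hp_pred]; positivity)
    rw [← map_natCast (algebraMap ℚ_[p] E), norm_algebraMap', Padic.norm_p]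
    exact inv_le_one_of_one_le₀ (by exact_mod_cast hp.out.one_le)
  calc _ ≤ (‖(p : E)‖ ^ ((1 : ℝ) / ((p : ℝ) - 1))) ^ (padicValNat p n * (p - 1)) :=
        pow_le_pow_of_le_one (by positivity) hc_le_one
          (by have := padicValNat_mul_sub_one_lt hp.out.ne_zero hn; omega)
    _ = ‖(n : E)‖ := by rw [mul_comm, pow_mul, hc_pow, norm_natCast_eq_norm_p_pow p hn]

theorem padic_log_term_estimate_general (p : ℕ) [Fact p.Prime]
    (E : Type*) [NormedField E] [NormedAlgebra ℚ_[p] E]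
    (x : E) (hx0 : x ≠ 0) (hx : ‖x‖ < ‖(p : E)‖ ^ ((1 : ℝ) / ((p : ℝ) - 1)))
    (n : ℕ) (hn : 2 ≤ n) :
    ‖x ^ n / (n : E)‖ < ‖x‖ := by
  have hx_pos : 0 < ‖x‖ := norm_pos_iff.mpr hx0
  have hpow_lt : ‖x‖ ^ (n - 1) < ‖(n : E)‖ :=
    (pow_lt_pow_left₀ hx hx_pos.le (by omega)).trans_le
      (norm_p_rpow_pow_pred_le_norm_natCast p (by omega))
  have hn_pos : 0 < ‖(n : E)‖ := (pow_nonneg hx_pos.le _).trans_lt hpow_lt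
  rw [norm_div, norm_pow, div_lt_iff₀ hn_pos]
  calc ‖x‖ ^ n = ‖x‖ ^ (n - 1) * ‖x‖ := by rw [← pow_succ, Nat.sub_add_cancel (by omega)]
    _ < ‖(n : E)‖ * ‖x‖ := mul_lt_mul_of_pos_right hpow_lt hx_pos
    _ = ‖x‖ * ‖(n : E)‖ := mul_comm _ _

/-- Let `p` be a prime number and let `E` be a complete nonarchimedean
normed field equipped with a structure of normed `ℚ_p`-algebra (so the norm of `E` is
multiplicative and restricts to the standard `p`-adic norm on `ℚ_p`).  If `x ∈ E` is
nonzero and `‖x‖ < ‖p‖^(1/(p−1))`, then for every integer `n ≥ 2` one has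
`‖xⁿ/n‖ < ‖x‖` (where `n` is regarded as an element of `E` via the natural map
`ℕ → E`). -/
theorem padic_log_term_estimate (p : ℕ) [Fact p.Prime]
    (E : Type*) [NormedField E] [CompleteSpace E] [NormedAlgebra ℚ_[p] E]
    (hna : IsNonarchimedean (fun y : E => ‖y‖))
    (x : E) (hx0 : x ≠ 0) (hx : ‖x‖ < ‖(p : E)‖ ^ ((1 : ℝ) / ((p : ℝ) - 1)))
    (n : ℕ) (hn : 2 ≤ n) :
    ‖x ^ n / (n : E)‖ < ‖x‖ :=
  padic_log_term_estimate_general p E x hx0 hx n hn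
end

section
/- Let 𝕜 be ℝ or ℂ and let V, W be normed vector spaces over 𝕜. Then the projective tensor seminorm π on V ⊗_𝕜 W is a cross norm on elementary tensors: for all v ∈ V and w ∈ W, π(v ⊗ w) = ‖v‖ · ‖w‖. -/
/-!
The bound `π(v ⊗ w) ≤ ‖v‖‖w‖` comes from the one-term representation. Conversely, by
Hahn–Banach there are functionals `f`, `g` of norm at most one with `f v = ‖v‖` and
`g w = ‖w‖`; the functional `a ⊗ b ↦ f a * g b` has modulus at most `‖a‖‖b‖` on elementary
tensors, hence at most the cost of any representation, and it takes the value `‖v‖‖w‖`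
at `v ⊗ w`.
-/

open scoped TensorProduct
open Finset

/-- The projective tensor seminorm on `V ⊗[𝕜] W`:
`π(z) = inf { Σᵢ ‖vᵢ‖·‖wᵢ‖ : z = Σᵢ vᵢ ⊗ wᵢ, the sums finite }`. -/
noncomputable def projTensorSeminorm (𝕜 : Type*) [NontriviallyNormedField 𝕜]
    (V W : Type*) [NormedAddCommGroup V] [NormedSpace 𝕜 V]
    [NormedAddCommGroup W] [NormedSpace 𝕜 W] (z : TensorProduct 𝕜 V W) : ℝ :=
  sInf {r : ℝ | ∃ (n : ℕ) (v : Fin n → V) (w : Fin n → W),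
    z = ∑ i, v i ⊗ₜ[𝕜] w i ∧ r = ∑ i, ‖v i‖ * ‖w i‖}

section NontriviallyNormedField

variable {𝕜 : Type*} [NontriviallyNormedField 𝕜]
  {V W : Type*} [NormedAddCommGroup V] [NormedSpace 𝕜 V]
  [NormedAddCommGroup W] [NormedSpace 𝕜 W]

lemma projTensorSeminorm_le_of_eq_sum {z : V ⊗[𝕜] W} {n : ℕ} {v : Fin n → V} {w : Fin n → W}
    (hz : z = ∑ i, v i ⊗ₜ[𝕜] w i) :
    projTensorSeminorm 𝕜 V W z ≤ ∑ i, ‖v i‖ * ‖w i‖ := by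
  refine csInf_le ⟨0, ?_⟩ ⟨n, v, w, hz, rfl⟩
  rintro r ⟨m, v', w', -, rfl⟩
  positivity

lemma projTensorSeminorm_tmul_le (v : V) (w : W) :
    projTensorSeminorm 𝕜 V W (v ⊗ₜ[𝕜] w) ≤ ‖v‖ * ‖w‖ := by
  simpa using projTensorSeminorm_le_of_eq_sum (n := 1) (v := fun _ ↦ v) (w := fun _ ↦ w)
    (by simp)

lemma norm_le_projTensorSeminorm (L : V ⊗[𝕜] W →ₗ[𝕜] 𝕜)
    (hL : ∀ a b, ‖L (a ⊗ₜ[𝕜] b)‖ ≤ ‖a‖ * ‖b‖) (z : V ⊗[𝕜] W) :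
    ‖L z‖ ≤ projTensorSeminorm 𝕜 V W z := by
  obtain ⟨n, v, w, hz⟩ := TensorProduct.exists_sum_tmul_eq z
  refine le_csInf ⟨_, n, v, w, hz, rfl⟩ ?_
  rintro r ⟨m, v', w', rfl, rfl⟩
  calc ‖L (∑ i, v' i ⊗ₜ[𝕜] w' i)‖ = ‖∑ i, L (v' i ⊗ₜ[𝕜] w' i)‖ := by rw [map_sum]
    _ ≤ ∑ i, ‖L (v' i ⊗ₜ[𝕜] w' i)‖ := norm_sum_le _ _
    _ ≤ ∑ i, ‖v' i‖ * ‖w' i‖ := sum_le_sum fun i _ ↦ hL _ _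

noncomputable def StrongDual.tensorMul (f : StrongDual 𝕜 V) (g : StrongDual 𝕜 W) :
    V ⊗[𝕜] W →ₗ[𝕜] 𝕜 :=
  LinearMap.mul' 𝕜 𝕜 ∘ₗ TensorProduct.map f.toLinearMap g.toLinearMap

@[simp]
lemma StrongDual.tensorMul_tmul (f : StrongDual 𝕜 V) (g : StrongDual 𝕜 W) (a : V) (b : W) :
    f.tensorMul g (a ⊗ₜ[𝕜] b) = f a * g b := by
  simp [StrongDual.tensorMul]

lemma StrongDual.norm_tensorMul_tmul_le {f : StrongDual 𝕜 V} {g : StrongDual 𝕜 W}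
    (hf : ‖f‖ ≤ 1) (hg : ‖g‖ ≤ 1) (a : V) (b : W) :
    ‖f.tensorMul g (a ⊗ₜ[𝕜] b)‖ ≤ ‖a‖ * ‖b‖ := by
  rw [tensorMul_tmul, norm_mul]
  exact mul_le_mul (f.le_of_opNorm_le hf a |>.trans_eq (one_mul _))
    (g.le_of_opNorm_le hg b |>.trans_eq (one_mul _)) (norm_nonneg _) (norm_nonneg _)

end NontriviallyNormedField

/-- Let `𝕜` be `ℝ` or `ℂ` and let `V, W` be normed vector spaces over
`𝕜`.  Then the projective tensor seminorm `π` on `V ⊗_𝕜 W` is a cross norm on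
elementary tensors: for all `v ∈ V` and `w ∈ W`, `π(v ⊗ w) = ‖v‖ · ‖w‖`. -/
theorem projTensorSeminorm_tmul_archimedean (𝕜 : Type*) [RCLike 𝕜]
    (V W : Type*) [NormedAddCommGroup V] [NormedSpace 𝕜 V]
    [NormedAddCommGroup W] [NormedSpace 𝕜 W] (v : V) (w : W) :
    projTensorSeminorm 𝕜 V W (v ⊗ₜ[𝕜] w) = ‖v‖ * ‖w‖ := by
  refine le_antisymm (projTensorSeminorm_tmul_le v w) ?_
  obtain ⟨f, hf, hfv⟩ := exists_dual_vector'' 𝕜 v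
  obtain ⟨g, hg, hgw⟩ := exists_dual_vector'' 𝕜 w
  calc ‖v‖ * ‖w‖ = ‖f.tensorMul g (v ⊗ₜ[𝕜] w)‖ := by
        rw [StrongDual.tensorMul_tmul, hfv, hgw, norm_mul, RCLike.norm_ofReal,
          RCLike.norm_ofReal, abs_norm, abs_norm]
    _ ≤ projTensorSeminorm 𝕜 V W (v ⊗ₜ[𝕜] w) :=
        norm_le_projTensorSeminorm _ (StrongDual.norm_tensorMul_tmul_le hf hg) _
end
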